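/- For λ > 1, the function x(φ, λ) = arcsin((λ - sin φ)/√(λ² - 2λ sin φ + 1)) on φ ∈ [-π/2, π/2] is strictly decreasing on [-π/2, arcsin(1/λ)] from π/2 down to arccos(1/λ), and strictly increasing on [arcsin(1/λ), π/2] from arccos(1/λ) up to π/2. -/
import Mathlib


open Real

noncomputable def xFun (φ lam : ℝ) : ℝ :=
  Real.arcsin ((lam - Real.sin φ) / Real.sqrt (lam^2 - 2 * lam * Real.sin φ + 1))

lemma Dpos {lam s : ℝ} (hlam : 1 < lam) (hs : s ≤ 1) : 0 < lam^2 - 2*lam*s + 1 := by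
  nlinarith [sq_nonneg (lam - s), sq_nonneg (lam - 1)]

lemma xFun_eq (φ lam : ℝ) (hlam : 1 < lam) :
    xFun φ lam = Real.arcsin (Real.sqrt ((lam - Real.sin φ)^2 / (lam^2 - 2*lam*Real.sin φ + 1))) := by
  have hs1 : Real.sin φ ≤ 1 := Real.sin_le_one φ
  have hnn : 0 ≤ lam - Real.sin φ := by linarith
  rw [xFun, Real.sqrt_div (sq_nonneg _), Real.sqrt_sq hnn]

lemma g_mem {lam s : ℝ} (hlam : 1 < lam) (hs1 : -1 ≤ s) (hs2 : s ≤ 1) :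
    Real.sqrt ((lam - s)^2 / (lam^2 - 2*lam*s + 1)) ∈ Set.Icc (-1 : ℝ) 1 := by
  have hD := Dpos hlam hs2
  constructor
  · linarith [Real.sqrt_nonneg ((lam - s)^2 / (lam^2 - 2*lam*s + 1))]
  · have h : (lam - s)^2 / (lam^2 - 2*lam*s + 1) ≤ 1 := by
      rw [div_le_one hD]; nlinarith
    calc Real.sqrt ((lam - s)^2 / (lam^2 - 2*lam*s + 1)) ≤ Real.sqrt 1 := Real.sqrt_le_sqrt h
      _ = 1 := Real.sqrt_one

theorem stmt_4 (lam : ℝ) (hlam : 1 < lam) :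
    StrictAntiOn (fun φ => xFun φ lam) (Set.Icc (-(π/2)) (Real.arcsin (1/lam))) ∧
    StrictMonoOn (fun φ => xFun φ lam) (Set.Icc (Real.arcsin (1/lam)) (π/2)) ∧
    xFun (-(π/2)) lam = π/2 ∧
    xFun (Real.arcsin (1/lam)) lam = Real.arccos (1/lam) ∧
    xFun (π/2) lam = π/2 := by
  have hlam0 : (0:ℝ) < lam := by linarith
  have hinv0 : (0:ℝ) < 1/lam := by positivity
  have hinv1 : 1/lam < 1 := by rw [div_lt_one hlam0]; exact hlam
  have hsinarc : Real.sin (Real.arcsin (1/lam)) = 1/lam :=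
    Real.sin_arcsin (by linarith) (by linarith)
  have harc_le : Real.arcsin (1/lam) ≤ π/2 := Real.arcsin_le_pi_div_two _
  have harc_ge : -(π/2) ≤ Real.arcsin (1/lam) := Real.neg_pi_div_two_le_arcsin _
  refine ⟨?_, ?_, ?_, ?_, ?_⟩
  · -- strict anti
    intro a ha b hb hab
    have ha' : a ∈ Set.Icc (-(π/2)) (π/2) := ⟨ha.1, le_trans ha.2 harc_le⟩
    have hb' : b ∈ Set.Icc (-(π/2)) (π/2) := ⟨hb.1, le_trans hb.2 harc_le⟩
    set s₁ := Real.sin a with hs₁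
    set s₂ := Real.sin b with hs₂
    have hslt : s₁ < s₂ := Real.strictMonoOn_sin ha' hb' hab
    have hs₁m : -1 ≤ s₁ := Real.neg_one_le_sin a
    have hs₂le : s₂ ≤ 1/lam := by
      have := Real.strictMonoOn_sin.monotoneOn hb' ⟨harc_ge, harc_le⟩ hb.2
      rwa [hsinarc] at this
    have hs₂1 : s₂ ≤ 1 := Real.sin_le_one b
    have hs₁1 : s₁ ≤ 1 := Real.sin_le_one a
    have hD₁ := Dpos hlam hs₁1
    have hD₂ := Dpos hlam hs₂1
    simp only
    rw [xFun_eq a lam hlam, xFun_eq b lam hlam]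
    apply Real.strictMonoOn_arcsin (g_mem hlam (Real.neg_one_le_sin b) hs₂1)
      (g_mem hlam hs₁m hs₁1)
    apply Real.sqrt_lt_sqrt (by positivity)
    rw [div_lt_div_iff₀ hD₂ hD₁]
    have key : (lam - s₁)^2 * (lam^2 - 2*lam*s₂ + 1) - (lam - s₂)^2 * (lam^2 - 2*lam*s₁ + 1)
        = (s₂ - s₁) * ((1 - lam*s₁)*(lam - s₂) + (1 - lam*s₂)*(lam - s₁)) := by ring
    have hls2 : lam * s₂ ≤ 1 := by
      have := mul_le_mul_of_nonneg_left hs₂le (le_of_lt hlam0)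
      rwa [mul_one_div, div_self (ne_of_gt hlam0)] at this
    have h1 : 0 < 1 - lam*s₁ := by nlinarith
    have h2 : 0 ≤ 1 - lam*s₂ := by linarith
    nlinarith [mul_pos (sub_pos.2 hslt) (mul_pos h1 (by linarith : (0:ℝ) < lam - s₂)),
      mul_nonneg (mul_nonneg (by linarith : (0:ℝ) ≤ s₂ - s₁) h2) (by linarith : (0:ℝ) ≤ lam - s₁)]
  · -- strict mono
    intro a ha b hb hab
    have ha' : a ∈ Set.Icc (-(π/2)) (π/2) := ⟨le_trans harc_ge ha.1, ha.2⟩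
    have hb' : b ∈ Set.Icc (-(π/2)) (π/2) := ⟨le_trans harc_ge hb.1, hb.2⟩
    set s₁ := Real.sin a with hs₁
    set s₂ := Real.sin b with hs₂
    have hslt : s₁ < s₂ := Real.strictMonoOn_sin ha' hb' hab
    have hs₁ge : 1/lam ≤ s₁ := by
      have := Real.strictMonoOn_sin.monotoneOn ⟨harc_ge, harc_le⟩ ha' ha.1
      rwa [hsinarc] at this
    have hs₂1 : s₂ ≤ 1 := Real.sin_le_one b
    have hs₁1 : s₁ ≤ 1 := Real.sin_le_one a
    have hD₁ := Dpos hlam hs₁1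
    have hD₂ := Dpos hlam hs₂1
    simp only
    rw [xFun_eq a lam hlam, xFun_eq b lam hlam]
    apply Real.strictMonoOn_arcsin (g_mem hlam (Real.neg_one_le_sin a) hs₁1)
      (g_mem hlam (Real.neg_one_le_sin b) hs₂1)
    apply Real.sqrt_lt_sqrt (by positivity)
    rw [div_lt_div_iff₀ hD₁ hD₂]
    have h1 : 0 ≤ lam*s₁ - 1 := by
      have : lam * (1/lam) ≤ lam * s₁ := by
        apply mul_le_mul_of_nonneg_left hs₁ge (le_of_lt hlam0)
      rw [mul_one_div, div_self (ne_of_gt hlam0)] at this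
      linarith
    have h2 : 0 < lam*s₂ - 1 := by nlinarith
    nlinarith [mul_pos (mul_pos (sub_pos.2 hslt) h2) (by linarith : (0:ℝ) < lam - s₁),
      mul_nonneg (mul_nonneg (by linarith : (0:ℝ) ≤ s₂ - s₁) h1) (by linarith : (0:ℝ) ≤ lam - s₂)]
  · -- φ = -π/2
    rw [xFun, Real.sin_neg, Real.sin_pi_div_two]
    have : lam^2 - 2*lam*(-1) + 1 = (lam + 1)^2 := by ring
    rw [this, Real.sqrt_sq (by linarith), show lam - (-1) = lam + 1 by ring,
      div_self (by linarith : lam + 1 ≠ 0), Real.arcsin_one]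
  · -- φ = arcsin (1/lam)
    rw [xFun, hsinarc, Real.arccos_eq_arcsin (le_of_lt hinv0)]
    congr 1
    have h1 : lam^2 - 2*lam*(1/lam) + 1 = lam^2 - 1 := by field_simp; ring
    have h2 : (1:ℝ) - (1/lam)^2 = (lam^2 - 1)/lam^2 := by field_simp
    rw [h1, h2, Real.sqrt_div (by nlinarith : (0:ℝ) ≤ lam^2 - 1),
      Real.sqrt_sq (le_of_lt hlam0)]
    have ht : (0:ℝ) < Real.sqrt (lam^2 - 1) := Real.sqrt_pos.2 (by nlinarith)
    have ht2 : Real.sqrt (lam^2 - 1)^2 = lam^2 - 1 := Real.sq_sqrt (by nlinarith)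
    field_simp
    nlinarith [ht2]
  · -- φ = π/2
    rw [xFun, Real.sin_pi_div_two]
    have : lam^2 - 2*lam*1 + 1 = (lam - 1)^2 := by ring
    rw [this, Real.sqrt_sq (by linarith),
      div_self (by intro h; rw [sub_eq_zero] at h; linarith : lam - 1 ≠ 0), Real.arcsin_one]
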